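/- Oracle property of GOAL, part 1 (consistency in variable selection). Let (X_i, A_i), i = 1, 2, …, be i.i.d. random pairs with X_i ∈ ℝ^p and A_i ∈ {0,1} such that P(A_i = 1 | X_i) = exp(X_iᵀα*)/(1 + exp(X_iᵀα*)) almost surely, where α* ∈ ℝ^p satisfies α*_j ≠ 0 for j ∈ 𝒜 := {1, …, p₀} and α*_j = 0 for j ∈ 𝒜ᶜ := {p₀+1, …, p}. Assume E‖X₁‖³ < ∞ and that the Fisher information matrix F(α*) = E[φ''(X₁ᵀα*) X₁X₁ᵀ] is positive definite. Let β̂⁽ⁿ⁾ ∈ ℝ^p be random vectors (functions of the first n observations) such that, for each j ∈ 𝒜, β̂⁽ⁿ⁾_j converges in probability to some β*_j ≠ 0, and, for each j ∈ 𝒜ᶜ, √n·β̂⁽ⁿ⁾_j is bounded in probability (i.e., for every ε > 0 there is M with limsup_n P(√n|β̂⁽ⁿ⁾_j| > M) ≤ ε, and P(β̂⁽ⁿ⁾_j = 0) → 0). Fix γ > 1 and set ŵ⁽ⁿ⁾_j = |β̂⁽ⁿ⁾_j|^{−γ}. Let λ_{1,n}, λ_{2,n} ≥ 0 satisfy λ_{1,n}/√n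 → 0, λ_{1,n} n^{γ/2−1} → ∞, and λ_{2,n}/√n → 0. Let α̂⁽ⁿ⁾ be any measurable choice of global minimizer over α ∈ ℝ^p of the GOAL objective ℓ_n(α) + λ_{1,n} Σ_{j=1}^p ŵ⁽ⁿ⁾_j |α_j| + λ_{2,n} Σ_{j=1}^p α_j². Then P(α̂⁽ⁿ⁾_j = 0 for all j ∈ 𝒜ᶜ) → 1 as n → ∞. -/

import Mathlib

open MeasureTheory ProbabilityTheory Filter
open scoped RealInnerProductSpace ENNReal

/-- The logistic log-partition function `φ(t) = log(1 + exp t)`. -/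
noncomputable def phi (t : ℝ) : ℝ := Real.log (1 + Real.exp t)

/-- `φ'(t) = exp t / (1 + exp t)` (the logistic function). -/
noncomputable def phiD1 (t : ℝ) : ℝ := Real.exp t / (1 + Real.exp t)

/-- `φ''(t) = exp t / (1 + exp t)^2`. -/
noncomputable def phiD2 (t : ℝ) : ℝ := Real.exp t / (1 + Real.exp t) ^ 2

/-- The GOAL objective
`ℓ_n(α) + λ₁ ∑_j ŵ_j |α_j| + λ₂ ∑_j α_j²` with adaptive weights `ŵ_j = |β̂_j|^{−γ}`,
where `ℓ_n` is the logistic negative log-likelihood of the first `n` observations. -/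
noncomputable def goalObjective {p : ℕ} (n : ℕ)
    (x : ℕ → EuclideanSpace ℝ (Fin p)) (a : ℕ → ℝ)
    (βhat : EuclideanSpace ℝ (Fin p)) (γ lam1 lam2 : ℝ)
    (α : EuclideanSpace ℝ (Fin p)) : ℝ :=
  (∑ i ∈ Finset.range n, (-(a i) * ⟪x i, α⟫ + phi ⟪x i, α⟫))
    + lam1 * ∑ j, |βhat j| ^ (-γ) * |α j|
    + lam2 * ∑ j, (α j) ^ 2

/-!
Zeroing the coordinate `α_j` of a minimiser changes the logistic loss by at most
`|α_j| ∑_i |x_ij|`, because each summand `t ↦ -a t + φ t` is 1-Lipschitz for `a ∈ {0,1}`, while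
the ridge term decreases and the weighted `ℓ¹` term drops by `λ₁ ŵ_j |α_j|`. Hence `α̂_j ≠ 0`
forces `λ₁ ŵ_j ≤ ∑_{i<n} ‖X_i‖`. For an inactive `j`, on the event `√n |β̂_j| ≤ M` the weight
satisfies `ŵ_j ≥ n^{γ/2} / M^γ`, so `λ₁ ŵ_j ≥ λ₁ n^{γ/2-1} · n / M^γ` eventually exceeds `C n`;
and by Markov's inequality `∑_{i<n} ‖X_i‖ ≤ C n` outside an event of probability at most
`E‖X_0‖ / C`, uniformly in `n`.
-/

lemma hasDerivAt_phi (t : ℝ) : HasDerivAt phi (phiD1 t) t :=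
  ((Real.hasDerivAt_exp t).const_add 1).log (by positivity)

lemma phiD1_nonneg (t : ℝ) : 0 ≤ phiD1 t := by
  unfold phiD1; positivity

lemma phiD1_le_one (t : ℝ) : phiD1 t ≤ 1 := by
  unfold phiD1
  rw [div_le_one (by positivity)]
  linarith

lemma lipschitzWith_one_neg_mul_add_phi {a : ℝ} (ha : a = 0 ∨ a = 1) :
    LipschitzWith 1 (fun t => -a * t + phi t) := by
  have hderiv : ∀ t, HasDerivAt (fun t => -a * t + phi t) (phiD1 t - a) t := fun t =>
    (((hasDerivAt_id' t).const_mul (-a)).fun_add (hasDerivAt_phi t)).congr_deriv (by ring)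
  refine lipschitzWith_of_nnnorm_deriv_le (fun t => (hderiv t).differentiableAt) fun t => ?_
  rw [(hderiv t).deriv, ← NNReal.coe_le_coe, coe_nnnorm, Real.norm_eq_abs, NNReal.coe_one,
    abs_le]
  rcases ha with rfl | rfl <;> constructor <;> linarith [phiD1_nonneg t, phiD1_le_one t]

lemma Fintype.sum_apply_update {ι : Type*} [Fintype ι] [DecidableEq ι] (g : ι → ℝ → ℝ)
    (v : ι → ℝ) (j : ι) (t : ℝ) :
    ∑ k, g k (Function.update v j t k) = ∑ k, g k (v k) - g j (v j) + g j t := by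
  simp_rw [Function.apply_update g v j t]
  rw [Finset.sum_update_of_mem (Finset.mem_univ j), Finset.sdiff_singleton_eq_erase,
    ← Finset.add_sum_erase _ (fun k => g k (v k)) (Finset.mem_univ j)]
  ring

lemma goalObjective_update_zero_le {p : ℕ} (n : ℕ) (x : ℕ → EuclideanSpace ℝ (Fin p))
    {a : ℕ → ℝ} (ha : ∀ i, a i = 0 ∨ a i = 1) (b : EuclideanSpace ℝ (Fin p)) (γ lam1 : ℝ)
    {lam2 : ℝ} (hlam2 : 0 ≤ lam2) (α : EuclideanSpace ℝ (Fin p)) (j : Fin p) :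
    goalObjective n x a b γ lam1 lam2 (WithLp.toLp 2 (Function.update α.ofLp j 0))
      ≤ goalObjective n x a b γ lam1 lam2 α
        + |α j| * (∑ i ∈ Finset.range n, |x i j| - lam1 * |b j| ^ (-γ)) := by
  set α' : EuclideanSpace ℝ (Fin p) := WithLp.toLp 2 (Function.update α.ofLp j 0)
  have hinner : ∀ i, ⟪x i, α'⟫ = ⟪x i, α⟫ - x i j * α j := by
    intro i
    simp only [PiLp.inner_apply, RCLike.inner_apply, conj_trivial, α']
    rw [Fintype.sum_apply_update (fun k t => t * x i k)]
    simp [mul_comm]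
  have hloss : ∀ i, -a i * ⟪x i, α'⟫ + phi ⟪x i, α'⟫
      ≤ -a i * ⟪x i, α⟫ + phi ⟪x i, α⟫ + |α j| * |x i j| := by
    intro i
    have := (lipschitzWith_one_neg_mul_add_phi (ha i)).dist_le_mul ⟪x i, α'⟫ ⟪x i, α⟫
    rw [Real.dist_eq, Real.dist_eq, hinner, NNReal.coe_one, one_mul,
      show ⟪x i, α⟫ - x i j * α j - ⟪x i, α⟫ = -(x i j * α j) by ring, abs_neg, abs_mul] at this
    rw [hinner]
    linarith [(abs_le.1 this).2]
  have hl1 := Fintype.sum_apply_update (fun k t => |b k| ^ (-γ) * |t|) α.ofLp j 0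
  have hl2 := Fintype.sum_apply_update (fun k t => t ^ 2) α.ofLp j 0
  simp only [abs_zero, mul_zero, add_zero, ne_eq, OfNat.ofNat_ne_zero, not_false_eq_true,
    zero_pow] at hl1 hl2
  have hsum : ∑ i ∈ Finset.range n, (-a i * ⟪x i, α'⟫ + phi ⟪x i, α'⟫)
      ≤ ∑ i ∈ Finset.range n, (-a i * ⟪x i, α⟫ + phi ⟪x i, α⟫)
        + |α j| * ∑ i ∈ Finset.range n, |x i j| := by
    rw [Finset.mul_sum, ← Finset.sum_add_distrib]
    exact Finset.sum_le_sum fun i _ => hloss i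
  simp only [goalObjective, α']
  rw [hl1, hl2]
  nlinarith [mul_nonneg hlam2 (sq_nonneg (α j))]

lemma lam1_mul_weight_le_sum_abs_of_minimizer {p : ℕ} {n : ℕ} {x : ℕ → EuclideanSpace ℝ (Fin p)}
    {a : ℕ → ℝ} (ha : ∀ i, a i = 0 ∨ a i = 1) {b : EuclideanSpace ℝ (Fin p)} {γ lam1 lam2 : ℝ}
    (hlam2 : 0 ≤ lam2) {α : EuclideanSpace ℝ (Fin p)}
    (hmin : ∀ α', goalObjective n x a b γ lam1 lam2 α ≤ goalObjective n x a b γ lam1 lam2 α')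
    {j : Fin p} (hj : α j ≠ 0) :
    lam1 * |b j| ^ (-γ) ≤ ∑ i ∈ Finset.range n, |x i j| := by
  have h := (hmin _).trans (goalObjective_update_zero_le n x ha b γ lam1 hlam2 α j)
  have hprod : 0 ≤ |α j| * (∑ i ∈ Finset.range n, |x i j| - lam1 * |b j| ^ (-γ)) := by
    linarith
  exact sub_nonneg.1 (nonneg_of_mul_nonneg_right hprod (abs_pos.2 hj))

lemma mul_lt_mul_abs_rpow_neg {n lam C M b γ : ℝ} (hn : 0 < n) (hγ : 0 ≤ γ) (hlam : 0 ≤ lam)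
    (hb : b ≠ 0) (hbM : √n * |b| ≤ M) (hgrow : C * M ^ γ < lam * n ^ (γ / 2 - 1)) :
    C * n < lam * |b| ^ (-γ) := by
  have hM : 0 < M := (mul_pos (Real.sqrt_pos.2 hn) (abs_pos.2 hb)).trans_le hbM
  have hsqrt : √n ^ γ = n ^ (γ / 2 - 1) * n := by
    rw [← Real.rpow_add_one hn.ne', Real.sqrt_eq_rpow, ← Real.rpow_mul hn.le]
    ring_nf
  have hweight : √n ^ γ ≤ M ^ γ * |b| ^ (-γ) :=
    calc √n ^ γ = (√n * |b|) ^ γ * |b| ^ (-γ) := by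
          rw [Real.mul_rpow (Real.sqrt_nonneg n) (abs_nonneg b), mul_assoc,
            ← Real.rpow_add (abs_pos.2 hb), add_neg_cancel, Real.rpow_zero, mul_one]
      _ ≤ M ^ γ * |b| ^ (-γ) := by gcongr
  rw [← mul_lt_mul_iff_of_pos_right (Real.rpow_pos_of_pos hM γ)]
  calc C * n * M ^ γ = C * M ^ γ * n := by ring
    _ < lam * n ^ (γ / 2 - 1) * n := by gcongr
    _ = lam * √n ^ γ := by rw [hsqrt, mul_assoc]
    _ ≤ lam * (M ^ γ * |b| ^ (-γ)) := by gcongr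
    _ = lam * |b| ^ (-γ) * M ^ γ := by ring

section Probability

variable {Ω : Type*} [MeasurableSpace Ω] {μ : Measure Ω}

lemma measure_mul_lt_sum_le [IsFiniteMeasure μ] {Y : ℕ → Ω → ℝ} (hY : ∀ i ω, 0 ≤ Y i ω)
    (hint : ∀ i, Integrable (Y i) μ) {m : ℝ} (hm : ∀ i, ∫ ω, Y i ω ∂μ = m) {C : ℝ} (hC : 0 < C)
    {n : ℕ} (hn : 0 < n) :
    μ {ω | C * n < ∑ i ∈ Finset.range n, Y i ω} ≤ ENNReal.ofReal (m / C) := by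
  have hmarkov := mul_meas_ge_le_integral_of_nonneg
    (ae_of_all μ fun ω => Finset.sum_nonneg fun i _ => hY i ω)
    (integrable_finsetSum (Finset.range n) fun i _ => hint i) (C * n)
  simp only [integral_finsetSum _ fun i _ => hint i, hm, Finset.sum_const, Finset.card_range,
    nsmul_eq_mul] at hmarkov
  have hreal : μ.real {ω | C * n ≤ ∑ i ∈ Finset.range n, Y i ω} ≤ m / C := by
    rw [le_div_iff₀ hC]
    have hn' : (0 : ℝ) < n := by exact_mod_cast hn
    nlinarith
  calc μ {ω | C * n < ∑ i ∈ Finset.range n, Y i ω}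
      ≤ μ {ω | C * n ≤ ∑ i ∈ Finset.range n, Y i ω} :=
        measure_mono (Set.ofPred_subset_ofPred.2 fun _ => le_of_lt)
    _ = ENNReal.ofReal (μ.real {ω | C * n ≤ ∑ i ∈ Finset.range n, Y i ω}) :=
        (ofReal_measureReal (measure_ne_top μ _)).symm
    _ ≤ ENNReal.ofReal (m / C) := ENNReal.ofReal_le_ofReal hreal

lemma exists_measure_mul_lt_sum_le [IsFiniteMeasure μ] {Y : ℕ → Ω → ℝ}
    (hY : ∀ i ω, 0 ≤ Y i ω) (hint : ∀ i, Integrable (Y i) μ)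
    (hm : ∀ i, ∫ ω, Y i ω ∂μ = ∫ ω, Y 0 ω ∂μ) {δ : ℝ} (hδ : 0 < δ) :
    ∃ C : ℝ, ∀ᶠ n : ℕ in atTop, μ {ω | C * n < ∑ i ∈ Finset.range n, Y i ω} ≤ ENNReal.ofReal δ := by
  set m := ∫ ω, Y 0 ω ∂μ
  have hm0 : 0 ≤ m := integral_nonneg (hY 0)
  refine ⟨m / δ + 1, (eventually_gt_atTop 0).mono fun n hn => ?_⟩
  refine (measure_mul_lt_sum_le hY hint hm (by positivity) hn).trans (ENNReal.ofReal_le_ofReal ?_)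
  rw [div_le_iff₀ (by positivity), mul_add, mul_div_cancel₀ _ hδ.ne']
  linarith

lemma tendsto_measure_of_tendsto_measure_compl [IsProbabilityMeasure μ] {α : Type*}
    {l : Filter α} {s : α → Set Ω} (h : Tendsto (fun k => μ (s k)ᶜ) l (nhds 0)) :
    Tendsto (fun k => μ (s k)) l (nhds 1) := by
  have hlower : Tendsto (fun k => 1 - μ (s k)ᶜ) l (nhds 1) := by
    simpa using ENNReal.Tendsto.sub tendsto_const_nhds h (Or.inl ENNReal.one_ne_top)
  refine tendsto_of_tendsto_of_tendsto_of_le_of_le hlower tendsto_const_nhds (fun k => ?_)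
    fun k => prob_le_one
  rw [tsub_le_iff_right]
  calc (1 : ℝ≥0∞) = μ (s k ∪ (s k)ᶜ) := by rw [Set.union_compl_self, measure_univ]
    _ ≤ μ (s k) + μ (s k)ᶜ := measure_union_le _ _

lemma tendsto_measure_forall_of_tendsto_measure_not [IsProbabilityMeasure μ] {ι : Type*}
    [Fintype ι] {Q : ι → Prop} {P : ℕ → ι → Ω → Prop}
    (h : ∀ j, Q j → Tendsto (fun n => μ {ω | ¬ P n j ω}) atTop (nhds 0)) :
    Tendsto (fun n => μ {ω | ∀ j, Q j → P n j ω}) atTop (nhds 1) := by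
  refine tendsto_measure_of_tendsto_measure_compl ?_
  have hsum : Tendsto (fun n => ∑ j, μ {ω | Q j ∧ ¬ P n j ω}) atTop (nhds 0) := by
    rw [← Finset.sum_const_zero (s := (Finset.univ : Finset ι))]
    refine tendsto_finsetSum _ fun j _ => ?_
    by_cases hj : Q j
    · simpa [hj] using h j hj
    · simp [hj]
  refine tendsto_of_tendsto_of_tendsto_of_le_of_le tendsto_const_nhds hsum (fun n => zero_le)
    fun n => ?_
  calc μ {ω | ∀ j, Q j → P n j ω}ᶜ = μ (⋃ j, {ω | Q j ∧ ¬ P n j ω}) := by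
        congr 1; ext ω; simp
    _ ≤ ∑ j, μ {ω | Q j ∧ ¬ P n j ω} := measure_iUnion_fintype_le _ _

lemma tendsto_measure_ne_zero_of_lam_mul_weight_le {f b S : ℕ → Ω → ℝ}
    {lam : ℕ → ℝ} {γ : ℝ} (hγ : 0 ≤ γ) (hlam : ∀ n, 0 ≤ lam n)
    (hgrow : Tendsto (fun n : ℕ => lam n * (n : ℝ) ^ (γ / 2 - 1)) atTop atTop)
    (hkkt : ∀ n ω, f n ω ≠ 0 → lam n * |b n ω| ^ (-γ) ≤ S n ω)
    (hS : ∀ δ : ℝ, 0 < δ → ∃ C : ℝ, ∀ᶠ n : ℕ in atTop, μ {ω | C * n < S n ω} ≤ ENNReal.ofReal δ)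
    (hbound : ∀ ε : ℝ, 0 < ε → ∃ M : ℝ,
      limsup (fun n : ℕ => μ {ω | M < √n * |b n ω|}) atTop ≤ ENNReal.ofReal ε)
    (hzero : Tendsto (fun n : ℕ => μ {ω | b n ω = 0}) atTop (nhds 0)) :
    Tendsto (fun n : ℕ => μ {ω | f n ω ≠ 0}) atTop (nhds 0) := by
  rw [ENNReal.tendsto_nhds_zero]
  intro ε hε
  have hε3 : 0 < ε / 3 := ENNReal.div_pos hε.ne' ENNReal.ofNat_ne_top
  obtain ⟨δ, -, hδpos, hδε⟩ := ENNReal.lt_iff_exists_real_btwn.1 hε3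
  have hδ : 0 < δ := ENNReal.ofReal_pos.1 hδpos
  obtain ⟨C, hC⟩ := hS δ hδ
  obtain ⟨M, hM⟩ := hbound (δ / 2) (half_pos hδ)
  have hMδ : ∀ᶠ n : ℕ in atTop, μ {ω | M < √n * |b n ω|} < ENNReal.ofReal δ :=
    eventually_lt_of_limsup_lt (hM.trans_lt
      ((ENNReal.ofReal_lt_ofReal_iff hδ).2 (half_lt_self hδ)))
  filter_upwards [hC, hMδ, ENNReal.tendsto_nhds_zero.1 hzero (ε / 3) hε3,
    hgrow.eventually_gt_atTop (C * M ^ γ), eventually_gt_atTop 0] with n hCn hMn hzn hgrown hn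
  have hsubset : {ω | f n ω ≠ 0}
      ⊆ {ω | C * n < S n ω} ∪ {ω | M < √n * |b n ω|} ∪ {ω | b n ω = 0} := by
    intro ω hf
    by_contra hgood
    simp only [Set.mem_union, Set.mem_ofPred_eq, not_or, not_lt] at hgood
    obtain ⟨⟨hSn, hbM⟩, hb⟩ := hgood
    have hweight := mul_lt_mul_abs_rpow_neg (Nat.cast_pos.2 hn) hγ (hlam n) hb hbM hgrown
    linarith [hkkt n ω hf]
  calc μ {ω | f n ω ≠ 0}
      ≤ μ {ω | C * n < S n ω} + μ {ω | M < √n * |b n ω|} + μ {ω | b n ω = 0} :=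
        (measure_mono hsubset).trans
          ((measure_union_le _ _).trans (add_le_add_left (measure_union_le _ _) _))
    _ ≤ ε / 3 + ε / 3 + ε / 3 := by gcongr <;> order
    _ = ε := ENNReal.add_thirds ε

end Probability

theorem goal_oracle_variable_selection_consistency_general
    {p p₀ : ℕ}
    {Ω : Type*} [MeasureSpace Ω] [IsProbabilityMeasure (ℙ : Measure Ω)]
    (X : ℕ → Ω → EuclideanSpace ℝ (Fin p)) (A : ℕ → Ω → ℝ)
    (hXmeas : ∀ i, Measurable (X i)) (hAmeas : ∀ i, Measurable (A i))
    (hident : ∀ i, Measure.map (fun ω => (X i ω, A i ω)) ℙ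
      = Measure.map (fun ω => (X 0 ω, A 0 ω)) ℙ)
    (hA01 : ∀ i ω, A i ω = 0 ∨ A i ω = 1)
    (hmom : Integrable (fun ω => ‖X 0 ω‖ ^ 3) ℙ)
    (βhat : ℕ → Ω → EuclideanSpace ℝ (Fin p))
    (hβbound : ∀ j : Fin p, p₀ ≤ (j : ℕ) → ∀ ε : ℝ, 0 < ε → ∃ M : ℝ,
      limsup (fun n : ℕ => ℙ {ω | M < Real.sqrt n * |βhat n ω j|}) atTop
        ≤ ENNReal.ofReal ε)
    (hβzero : ∀ j : Fin p, p₀ ≤ (j : ℕ) →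
      Tendsto (fun n : ℕ => ℙ {ω | βhat n ω j = 0}) atTop (nhds 0))
    (γ : ℝ) (hγ : 1 < γ)
    (lam1 lam2 : ℕ → ℝ) (hlam1nn : ∀ n, 0 ≤ lam1 n) (hlam2nn : ∀ n, 0 ≤ lam2 n)
    (hlam1b : Tendsto (fun n : ℕ => lam1 n * (n : ℝ) ^ (γ / 2 - 1)) atTop atTop)
    (αhat : ℕ → Ω → EuclideanSpace ℝ (Fin p))
    (hαmin : ∀ n ω, ∀ α : EuclideanSpace ℝ (Fin p),
      goalObjective n (fun i => X i ω) (fun i => A i ω) (βhat n ω) γ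
          (lam1 n) (lam2 n) (αhat n ω)
        ≤ goalObjective n (fun i => X i ω) (fun i => A i ω) (βhat n ω) γ
          (lam1 n) (lam2 n) α) :
    Tendsto
      (fun n : ℕ => ℙ {ω | ∀ j : Fin p, p₀ ≤ (j : ℕ) → αhat n ω j = 0})
      atTop (nhds 1) := by
  have hident_norm : ∀ i, IdentDistrib (fun ω => ‖X i ω‖) (fun ω => ‖X 0 ω‖) ℙ ℙ := fun i =>
    (IdentDistrib.mk ((hXmeas i).prodMk (hAmeas i)).aemeasurable
      ((hXmeas 0).prodMk (hAmeas 0)).aemeasurable (hident i)).comp measurable_fst.norm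
  have hint : Integrable (fun ω => ‖X 0 ω‖) ℙ := by
    simpa using integrable_norm_rpow_of_le (hXmeas 0).aestronglyMeasurable zero_le_one
      zero_le_three (by norm_num) (by simpa using hmom)
  have hsum : ∀ δ : ℝ, 0 < δ → ∃ C : ℝ, ∀ᶠ n : ℕ in atTop,
      ℙ {ω | C * n < ∑ i ∈ Finset.range n, ‖X i ω‖} ≤ ENNReal.ofReal δ := fun δ hδ =>
    exists_measure_mul_lt_sum_le (fun i ω => norm_nonneg (X i ω))
      (fun i => (hident_norm i).integrable_iff.2 hint) (fun i => (hident_norm i).integral_eq) hδ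
  refine tendsto_measure_forall_of_tendsto_measure_not fun j hj => ?_
  refine tendsto_measure_ne_zero_of_lam_mul_weight_le (by linarith) hlam1nn hlam1b
    (fun n ω hα => ?_) hsum (hβbound j hj) (hβzero j hj)
  exact (lam1_mul_weight_le_sum_abs_of_minimizer (fun i => hA01 i ω) (hlam2nn n) (hαmin n ω)
    hα).trans (Finset.sum_le_sum fun i _ => PiLp.norm_apply_le (X i ω) j)

/-- Oracle property of GOAL, part 1: consistency in variable selection.
Under i.i.d. logistic sampling with true coefficient `α*` supported on the first
`p₀` coordinates, moment and Fisher-information conditions, suitable behavior of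
the adaptive weights, and the tuning conditions `λ₁/√n → 0`, `λ₁ n^{γ/2−1} → ∞`,
`λ₂/√n → 0` with `γ > 1`, any measurable global minimizer `α̂⁽ⁿ⁾` of the GOAL
objective satisfies `P(α̂⁽ⁿ⁾_j = 0 for all j ∈ 𝒜ᶜ) → 1`. -/
theorem goal_oracle_variable_selection_consistency
    {p p₀ : ℕ} (hp₀ : p₀ ≤ p)
    {Ω : Type*} [MeasureSpace Ω] [IsProbabilityMeasure (ℙ : Measure Ω)]
    (X : ℕ → Ω → EuclideanSpace ℝ (Fin p)) (A : ℕ → Ω → ℝ)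
    (hXmeas : ∀ i, Measurable (X i)) (hAmeas : ∀ i, Measurable (A i))
    (hindep : iIndepFun (fun i ω => (X i ω, A i ω)) ℙ)
    (hident : ∀ i, Measure.map (fun ω => (X i ω, A i ω)) ℙ
      = Measure.map (fun ω => (X 0 ω, A 0 ω)) ℙ)
    (hA01 : ∀ i ω, A i ω = 0 ∨ A i ω = 1)
    (αstar : EuclideanSpace ℝ (Fin p))
    (hcond : ∀ i, (MeasureTheory.condExp
        (MeasurableSpace.comap (X i) inferInstance) ℙ (A i))
      =ᵐ[ℙ] fun ω => phiD1 ⟪X i ω, αstar⟫)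
    (hactive : ∀ j : Fin p, (j : ℕ) < p₀ → αstar j ≠ 0)
    (hinactive : ∀ j : Fin p, p₀ ≤ (j : ℕ) → αstar j = 0)
    (hmom : Integrable (fun ω => ‖X 0 ω‖ ^ 3) ℙ)
    (F : Matrix (Fin p) (Fin p) ℝ)
    (hF : ∀ j k, F j k = ∫ ω, phiD2 ⟪X 0 ω, αstar⟫ * X 0 ω j * X 0 ω k ∂ℙ)
    (hFpos : F.PosDef)
    (βhat : ℕ → Ω → EuclideanSpace ℝ (Fin p))
    (hβmeas : ∀ n, Measurable (βhat n))
    (βstar : EuclideanSpace ℝ (Fin p))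
    (hβstar : ∀ j : Fin p, (j : ℕ) < p₀ → βstar j ≠ 0)
    (hβcons : ∀ j : Fin p, (j : ℕ) < p₀ →
      TendstoInMeasure ℙ (fun n ω => βhat n ω j) atTop (fun _ => βstar j))
    (hβbound : ∀ j : Fin p, p₀ ≤ (j : ℕ) → ∀ ε : ℝ, 0 < ε → ∃ M : ℝ,
      limsup (fun n : ℕ => ℙ {ω | M < Real.sqrt n * |βhat n ω j|}) atTop
        ≤ ENNReal.ofReal ε)
    (hβzero : ∀ j : Fin p, p₀ ≤ (j : ℕ) →
      Tendsto (fun n : ℕ => ℙ {ω | βhat n ω j = 0}) atTop (nhds 0))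
    (γ : ℝ) (hγ : 1 < γ)
    (lam1 lam2 : ℕ → ℝ) (hlam1nn : ∀ n, 0 ≤ lam1 n) (hlam2nn : ∀ n, 0 ≤ lam2 n)
    (hlam1a : Tendsto (fun n : ℕ => lam1 n / Real.sqrt n) atTop (nhds 0))
    (hlam1b : Tendsto (fun n : ℕ => lam1 n * (n : ℝ) ^ (γ / 2 - 1)) atTop atTop)
    (hlam2 : Tendsto (fun n : ℕ => lam2 n / Real.sqrt n) atTop (nhds 0))
    (αhat : ℕ → Ω → EuclideanSpace ℝ (Fin p))
    (hαmeas : ∀ n, Measurable (αhat n))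
    (hαmin : ∀ n ω, ∀ α : EuclideanSpace ℝ (Fin p),
      goalObjective n (fun i => X i ω) (fun i => A i ω) (βhat n ω) γ
          (lam1 n) (lam2 n) (αhat n ω)
        ≤ goalObjective n (fun i => X i ω) (fun i => A i ω) (βhat n ω) γ
          (lam1 n) (lam2 n) α) :
    Tendsto
      (fun n : ℕ => ℙ {ω | ∀ j : Fin p, p₀ ≤ (j : ℕ) → αhat n ω j = 0})
      atTop (nhds 1) :=
  goal_oracle_variable_selection_consistency_general X A hXmeas hAmeas hident hA01 hmom βhat hβbound
    hβzero γ hγ lam1 lam2 hlam1nn hlam2nn hlam1b αhat hαmin
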